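/- For all m, n ∈ ℕ: ⟨Bⁿ, Bᵐ⟩ⁱ = T_{f,0}(q²)/(1−q⁻²)^f if m + n = 2f for some f ∈ ℕ, and ⟨Bⁿ, Bᵐ⟩ⁱ = 0 if m + n is odd. -/

import Mathlib

/-!
Setting: `K = ℚ(q)` is the field of rational functions over `ℚ`; `U⁻ = ℚ(q)[F]` and
`Uⁱ = ℚ(q)[B]` are both realized as `Polynomial K`, with `F` resp. `B` the variable
`Polynomial.X`.
-/

noncomputable section

abbrev K : Type := RatFunc ℚ

/-- The variable `q` of `ℚ(q)`. -/
def q : K := RatFunc.X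

/-- The quantum integer `[n] = (qⁿ - q⁻ⁿ)/(q - q⁻¹)`. -/
def qint (n : ℕ) : K := (q ^ n - q⁻¹ ^ n) / (q - q⁻¹)

/-- The quantum factorial `[n]! = [1][2]⋯[n]`, `[0]! = 1`. -/
def qfact : ℕ → K
  | 0 => 1
  | n + 1 => qfact n * qint (n + 1)

/-- The divided power `F⁽ⁿ⁾ = Fⁿ/[n]!` in `U⁻ = ℚ(q)[F]`. -/
def Fdiv (n : ℕ) : Polynomial K := Polynomial.C (qfact n)⁻¹ * Polynomial.X ^ n

/-- The value of `R` on the monomial `Fⁿ = [n]!·F⁽ⁿ⁾`: for `n ≥ 1` it is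
`[n]!·(q^{n-1}/(1-q⁻²))·F⁽ⁿ⁻¹⁾`, which corresponds to `R(F⁽ⁿ⁾) = (q^{n-1}/(1-q⁻²))·F⁽ⁿ⁻¹⁾`,
and `R(1) = 0`. -/
def Rval : ℕ → Polynomial K
  | 0 => 0
  | n + 1 => (qfact (n + 1) * (q ^ n / (1 - q⁻¹ ^ 2))) • Fdiv n

/-- `R : U⁻ → U⁻`, the unique `ℚ(q)`-linear map with `R(1) = 0` and
`R(F⁽ⁿ⁾) = (q^{n-1}/(1-q⁻²))·F⁽ⁿ⁻¹⁾` for `n ≥ 1`; it is defined by linear extension of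
`Rval` from the basis of monomials `Fⁿ`. -/
def Rmap : Polynomial K →ₗ[K] Polynomial K :=
  (Polynomial.basisMonomials K).constr K Rval

/-- `j(Bⁿ)`, defined recursively via `j(1) = 1`, `j(B·u) = F·j(u) + R(j(u))`. -/
def jval : ℕ → Polynomial K
  | 0 => 1
  | n + 1 => Polynomial.X * jval n + Rmap (jval n)

/-- `j : Uⁱ → U⁻`, the unique `ℚ(q)`-linear map with `j(1) = 1` and
`j(B·u) = F·j(u) + R(j(u))` for all `u ∈ Uⁱ`; it is defined by linear extension of `jval`
from the basis of monomials `Bⁿ`. -/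
def jmap : Polynomial K →ₗ[K] Polynomial K :=
  (Polynomial.basisMonomials K).constr K jval

/-- `∏_{k=1}^{n} (1 - q^{-2k})`. -/
def lusztigDenom (n : ℕ) : K := ∏ k ∈ Finset.range n, (1 - q⁻¹ ^ (2 * (k + 1)))

/-- Lusztig's form `(·,·)⁻` on `U⁻`: the symmetric `ℚ(q)`-bilinear form determined by
`(F⁽ᵐ⁾, F⁽ⁿ⁾)⁻ = δ_{m,n}/((1-q⁻²)(1-q⁻⁴)⋯(1-q⁻²ⁿ))`, i.e. on monomials
`(Fᵐ, Fⁿ)⁻ = δ_{m,n}·[n]!²/((1-q⁻²)⋯(1-q⁻²ⁿ))`, extended bilinearly via coefficients. -/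
def formMinus (p r : Polynomial K) : K :=
  p.sum fun n a => a * r.coeff n * (qfact n ^ 2 / lusztigDenom n)

/-- The ı-form on `Uⁱ`: `⟨u₁, u₂⟩ⁱ := (j(u₁), j(u₂))⁻`. -/
def iform (u₁ u₂ : Polynomial K) : K := formMinus (jmap u₁) (jmap u₂)

/-- Chord diagrams with `f` free chords and `n` tethered chords, encoded as involutions `σ` of
`{1,…,2f+n}` with exactly `n` fixed points: the fixed-point set is the set `T` of tether
points, and the 2-element orbits `{x, σ x}` are the blocks of the perfect matching `M` of
the complement of `T`. -/
def chordDiagrams (f n : ℕ) : Finset (Fin (2 * f + n) → Fin (2 * f + n)) :=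
  Finset.univ.filter fun σ =>
    (∀ x, σ (σ x) = x) ∧ (Finset.univ.filter fun x => σ x = x).card = n

/-- The number of crossings of a chord diagram encoded as an involution `σ`: the number of
pairs of matched blocks `{a<b}`, `{c<d}` with `a < c < b < d` (each such pair counted once,
via `(x, y) = (a, c)`), plus the number of pairs `(p, {a<b})` of a tether point `p` and a
block with `a < p < b` (counted via `(p, a)`). -/
def crossings {N : ℕ} (σ : Fin N → Fin N) : ℕ :=
  (Finset.univ.filter fun p : Fin N × Fin N =>
      σ p.1 ≠ p.1 ∧ σ p.2 ≠ p.2 ∧ p.1 < p.2 ∧ p.2 < σ p.1 ∧ σ p.1 < σ p.2).card +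
  (Finset.univ.filter fun p : Fin N × Fin N =>
      σ p.1 = p.1 ∧ p.2 < p.1 ∧ p.1 < σ p.2).card

/-- `T_{f,n}(q) = Σ_c N(f,n,c)·q^c ∈ ℕ[q]`, where `N(f,n,c)` is the number of chord diagrams
with `f` free chords, `n` tethered chords and `c` crossings. -/
def Tpoly (f n : ℕ) : Polynomial ℕ :=
  ∑ σ ∈ chordDiagrams f n, Polynomial.X ^ crossings σ

/-- `T_{f,n}(q²) ∈ ℚ(q)`: the polynomial `T_{f,n}` evaluated at `q²`. -/
def TpolyK (f n : ℕ) : K := Polynomial.eval₂ (Nat.castRingHom K) (q ^ 2) (Tpoly f n)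

lemma hq0 : q ≠ 0 := RatFunc.X_ne_zero

lemma hq1 : q * q⁻¹ = 1 := mul_inv_cancel₀ hq0

lemma hqk (k : ℕ) : q ^ k * q⁻¹ ^ k = 1 := by
  rw [← mul_pow, hq1, one_pow]

lemma q_pow_ne_one {n : ℕ} (hn : 1 ≤ n) : q ^ n ≠ 1 := by
  intro h
  have h2 : (algebraMap (Polynomial ℚ) K) (Polynomial.X ^ n) = algebraMap (Polynomial ℚ) K 1 := by
    simpa [map_pow, RatFunc.algebraMap_X, q] using h
  have := RatFunc.algebraMap_injective ℚ h2
  have := congrArg Polynomial.natDegree this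
  simp [Polynomial.natDegree_X_pow] at this
  omega

lemma q_sub_qinv_ne : q - q⁻¹ ≠ 0 := by
  rw [sub_ne_zero]
  intro h
  exact q_pow_ne_one (n := 2) (by norm_num) (by rw [sq]; nth_rewrite 2 [h]; exact hq1)

lemma one_sub_qinv_pow_ne (m : ℕ) (hm : 1 ≤ m) : 1 - q⁻¹ ^ m ≠ 0 := by
  rw [sub_ne_zero]
  intro h
  have : q ^ m * q⁻¹ ^ m = q ^ m := by rw [← h, mul_one]
  rw [hqk] at this
  exact q_pow_ne_one hm this.symm

lemma u_ne : 1 - q⁻¹ ^ 2 ≠ 0 := one_sub_qinv_pow_ne 2 (by norm_num)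

lemma qint_identA (k : ℕ) : qint (k + 1) * (1 - q⁻¹ ^ 2) = q ^ k * (1 - q⁻¹ ^ (2 * (k + 1))) := by
  rw [qint, div_mul_eq_mul_div, div_eq_iff q_sub_qinv_ne]
  linear_combination (q⁻¹^(k+1) - q^k * q⁻¹) * hq1 + (q * q⁻¹^(k+2) - q⁻¹^(k+3)) * hqk k

lemma qint_identB (k : ℕ) : qint (k + 1) * q ^ k = ∑ i ∈ Finset.range (k + 1), (q ^ 2) ^ i := by
  rw [geom_sum_eq (q_pow_ne_one (by norm_num)), qint, div_mul_eq_mul_div,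
    div_eq_div_iff q_sub_qinv_ne (sub_ne_zero.mpr (q_pow_ne_one (by norm_num)))]
  linear_combination q^(2*k+1) * hq1 - q * hqk (k+1) + q⁻¹ * hqk k

lemma qint_ne (k : ℕ) : qint (k + 1) ≠ 0 := by
  intro h
  have := qint_identA k
  rw [h, zero_mul] at this
  have h2 := one_sub_qinv_pow_ne (2*(k+1)) (by omega)
  have h3 := pow_ne_zero k hq0
  exact h2 (by
    rcases mul_eq_zero.mp this.symm with h | h
    · exact absurd h h3
    · exact h)

open Polynomial Finset

lemma qfact_ne (n : ℕ) : qfact n ≠ 0 := by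
  induction n with
  | zero => simp [qfact]
  | succ n ih => exact mul_ne_zero ih (qint_ne n)

lemma lusztigDenom_ne (n : ℕ) : lusztigDenom n ≠ 0 := by
  rw [lusztigDenom]
  exact Finset.prod_ne_zero_iff.mpr fun a _ => one_sub_qinv_pow_ne _ (by omega)

/-- the weight of the form -/
def w (n : ℕ) : K := qfact n ^ 2 / lusztigDenom n

/-- `R(Fᵏ⁺¹)/Fᵏ` -/
def rho (k : ℕ) : K := qint (k + 1) * q ^ k / (1 - q⁻¹ ^ 2)

lemma w_zero : w 0 = 1 := by simp [w, qfact, lusztigDenom]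


lemma w_succ (k : ℕ) : w (k + 1) = rho k * w k := by
  have hL : lusztigDenom (k+1) = lusztigDenom k * (1 - q⁻¹ ^ (2 * (k+1))) :=
    Finset.prod_range_succ _ _
  have hf : qfact (k+1) = qfact k * qint (k+1) := rfl
  rw [w, w, rho, hL, hf, div_mul_div_comm, div_eq_div_iff
    (mul_ne_zero (lusztigDenom_ne k) (one_sub_qinv_pow_ne _ (by omega)))
    (mul_ne_zero u_ne (lusztigDenom_ne k))]
  linear_combination (qfact k ^ 2 * qint (k+1) * lusztigDenom k) * qint_identA k

lemma rho_eq (k : ℕ) : rho k = (∑ i ∈ Finset.range (k + 1), (q ^ 2) ^ i) / (1 - q⁻¹ ^ 2) := by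
  rw [rho, qint_identB]

lemma constr_X_pow (f : ℕ → Polynomial K) (n : ℕ) :
    ((Polynomial.basisMonomials K).constr K f) (Polynomial.X ^ n) = f n := by
  rw [Polynomial.X_pow_eq_monomial]
  have : (Polynomial.monomial n (1:K)) = (Polynomial.basisMonomials K) n := by
    rw [Polynomial.coe_basisMonomials]
  rw [this, Module.Basis.constr_basis]

lemma jmap_X_pow (n : ℕ) : jmap (Polynomial.X ^ n) = jval n := constr_X_pow jval n

lemma Rmap_X_pow (n : ℕ) : Rmap (Polynomial.X ^ n) = Rval n := constr_X_pow Rval n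

lemma Rval_coeff (m k : ℕ) : (Rval m).coeff k = if m = k + 1 then rho k else 0 := by
  match m with
  | 0 => simp [Rval]
  | j + 1 =>
    rw [Rval, Fdiv, Polynomial.coeff_smul, Polynomial.coeff_C_mul, Polynomial.coeff_X_pow]
    by_cases h : k = j
    · subst h
      rw [if_pos rfl, if_pos rfl, smul_eq_mul, mul_one]
      have hf : qfact (k+1) = qfact k * qint (k+1) := rfl
      rw [rho, hf]
      linear_combination (qint (k+1) * q ^ k * (1 - q⁻¹^2)⁻¹) * mul_inv_cancel₀ (qfact_ne k)
    · rw [if_neg h, if_neg (by omega)]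
      simp

lemma Rmap_coeff (p : Polynomial K) (k : ℕ) :
    (Rmap p).coeff k = p.coeff (k + 1) * rho k := by
  have hrw : Rmap p = ∑ m ∈ p.support, p.coeff m • Rval m := by
    conv_lhs => rw [Polynomial.as_sum_support p]
    rw [map_sum]
    apply Finset.sum_congr rfl
    intro m hm
    rw [← Polynomial.smul_X_eq_monomial, map_smul, Rmap_X_pow]
  rw [hrw, Polynomial.finset_sum_coeff]
  rw [Finset.sum_eq_single (k+1)]
  · rw [Polynomial.coeff_smul, Rval_coeff, if_pos rfl, smul_eq_mul]
  · intro b _ hb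
    rw [Polynomial.coeff_smul, Rval_coeff, if_neg hb, smul_zero]
  · intro h
    rw [Polynomial.notMem_support_iff.mp h, zero_smul, Polynomial.coeff_zero]

lemma d_rec0 (N : ℕ) : (jval (N + 1)).coeff 0 = (jval N).coeff 1 * rho 0 := by
  rw [jval, Polynomial.coeff_add, Rmap_coeff, Polynomial.mul_coeff_zero,
    Polynomial.coeff_X_zero, zero_mul, zero_add]

lemma d_recS (N k : ℕ) :
    (jval (N + 1)).coeff (k + 1) = (jval N).coeff k + (jval N).coeff (k + 2) * rho (k + 1) := by
  rw [jval, Polynomial.coeff_add, Rmap_coeff, Polynomial.coeff_X_mul]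

lemma coeff_jval_zero (k : ℕ) (hk : k ≠ 0) : (jval 0).coeff k = 0 := by
  rw [jval, Polynomial.coeff_one, if_neg hk]

lemma d_vanish (N : ℕ) : ∀ k, N < k → (jval N).coeff k = 0 := by
  induction N with
  | zero => intro k hk; exact coeff_jval_zero k (by omega)
  | succ N ih =>
    intro k hk
    match k, hk with
    | k + 1, hk =>
      rw [d_recS, ih k (by omega), ih (k+2) (by omega), zero_mul, add_zero]

lemma d_parity (N : ℕ) : ∀ k, Odd (N + k) → (jval N).coeff k = 0 := by
  induction N with
  | zero =>
    intro k hk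
    exact coeff_jval_zero k (by rcases hk with ⟨t, ht⟩; omega)
  | succ N ih =>
    intro k hk
    rcases hk with ⟨t, ht⟩
    match k with
    | 0 =>
      rw [d_rec0, ih 1 ⟨t, by omega⟩, zero_mul]
    | k + 1 =>
      rw [d_recS, ih k ⟨t - 1, by omega⟩, ih (k+2) ⟨t, by omega⟩, zero_mul, add_zero]

lemma jval_natDegree (N : ℕ) : (jval N).natDegree < N + 1 :=
  Nat.lt_succ_of_le (Polynomial.natDegree_le_iff_coeff_eq_zero.mpr fun M h => d_vanish N M h)

lemma formMinus_eq (p r : Polynomial K) (B : ℕ) (hp : p.natDegree < B) :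
    formMinus p r = ∑ k ∈ Finset.range B, p.coeff k * r.coeff k * w k :=
  Polynomial.sum_over_range' p (fun n => by simp) B hp

lemma formMinus_comm (n m : ℕ) :
    formMinus (jval n) (jval m) = formMinus (jval m) (jval n) := by
  rw [formMinus_eq _ _ (n + m + 1) (by have := jval_natDegree n; omega),
    formMinus_eq _ _ (n + m + 1) (by have := jval_natDegree m; omega)]
  exact Finset.sum_congr rfl fun k _ => by ring

lemma formMinus_shift_aux (n m : ℕ) :
    formMinus (jval (n + 1)) (jval m)
      = ∑ k ∈ Finset.range (n + m + 1),
          ((jval n).coeff k * (jval m).coeff (k + 1)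
            + (jval n).coeff (k + 1) * (jval m).coeff k) * (rho k * w k) := by
  rw [formMinus_eq _ _ (n + m + 2) (by have := jval_natDegree (n+1); omega)]
  have hsplit : ∀ k ∈ Finset.range (n + m + 2),
      (jval (n+1)).coeff k * (jval m).coeff k * w k
        = (if k = 0 then 0 else (jval n).coeff (k - 1) * (jval m).coeff k * w k)
          + (jval n).coeff (k + 1) * rho k * ((jval m).coeff k * w k) := by
    intro k _
    match k with
    | 0 => rw [d_rec0, if_pos rfl, zero_add]; ring
    | k + 1 => rw [d_recS, if_neg (by omega)]; simp only [Nat.add_sub_cancel]; ring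
  rw [Finset.sum_congr rfl hsplit, Finset.sum_add_distrib]
  have h1 : ∑ k ∈ Finset.range (n + m + 2),
      (if k = 0 then 0 else (jval n).coeff (k - 1) * (jval m).coeff k * w k)
      = ∑ k ∈ Finset.range (n + m + 1),
          (jval n).coeff k * (jval m).coeff (k + 1) * (rho k * w k) := by
    rw [Finset.sum_range_succ' _ (n + m + 1), if_pos rfl, add_zero]
    apply Finset.sum_congr rfl
    intro k _
    rw [if_neg (by omega)]
    simp only [Nat.add_sub_cancel]
    rw [w_succ]
  have h2 : ∑ k ∈ Finset.range (n + m + 2),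
      (jval n).coeff (k + 1) * rho k * ((jval m).coeff k * w k)
      = ∑ k ∈ Finset.range (n + m + 1),
          (jval n).coeff (k + 1) * (jval m).coeff k * (rho k * w k) := by
    rw [Finset.sum_range_succ, d_vanish n (n + m + 2) (by omega), zero_mul, zero_mul, add_zero]
    apply Finset.sum_congr rfl
    intro k _
    ring
  rw [h1, h2, ← Finset.sum_add_distrib]
  exact Finset.sum_congr rfl fun k _ => by ring

lemma formMinus_shift (n m : ℕ) :
    formMinus (jval (n + 1)) (jval m) = formMinus (jval n) (jval (m + 1)) := by
  rw [formMinus_shift_aux n m, formMinus_comm n (m+1), formMinus_shift_aux m n]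
  rw [show m + n + 1 = n + m + 1 by omega]
  exact Finset.sum_congr rfl fun k _ => by ring

lemma formMinus_jval (n m : ℕ) :
    formMinus (jval n) (jval m) = (jval (n + m)).coeff 0 := by
  induction n generalizing m with
  | zero =>
    rw [formMinus_eq _ _ 1 (by simpa using jval_natDegree 0), Finset.sum_range_one, w_zero,
      Nat.zero_add]
    have h0 : (jval 0).coeff 0 = 1 := by simp [jval]
    rw [h0, one_mul, mul_one]
  | succ n ih =>
    rw [formMinus_shift n m, ih (m + 1), show n + (m + 1) = n + 1 + m by omega]

abbrev P1 {N : ℕ} (σ : Fin N → Fin N) (x y : Fin N) : Prop :=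
  σ x ≠ x ∧ σ y ≠ y ∧ x < y ∧ y < σ x ∧ σ x < σ y
abbrev P2 {N : ℕ} (σ : Fin N → Fin N) (x y : Fin N) : Prop :=
  σ x = x ∧ y < x ∧ x < σ y

def cnt {N : ℕ} (σ : Fin N → Fin N) (x y : Fin N) : ℕ :=
  (if P1 σ x y then 1 else 0) + (if P2 σ x y then 1 else 0)

lemma crossings_eq {N : ℕ} (σ : Fin N → Fin N) :
    crossings σ = ∑ x : Fin N, ∑ y : Fin N, cnt σ x y := by
  rw [crossings, Finset.card_filter, Finset.card_filter, Fintype.sum_prod_type,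
    Fintype.sum_prod_type, ← Finset.sum_add_distrib]
  apply Finset.sum_congr rfl
  intro x _
  rw [← Finset.sum_add_distrib]
  exact Finset.sum_congr rfl fun y _ => rfl

lemma cnt_last_left {N : ℕ} (τ : Fin (N+1) → Fin (N+1)) (y : Fin (N+1)) :
    cnt τ (Fin.last N) y = 0 := by
  rw [cnt, if_neg, if_neg, add_zero]
  · exact fun h => absurd h.2.2 (Fin.not_lt.mpr (Fin.le_last (τ y)))
  · exact fun h => absurd h.2.2.1 (Fin.not_lt.mpr (Fin.le_last y))

lemma cnt_last_right {N : ℕ} (τ : Fin (N+1) → Fin (N+1)) (x : Fin (N+1)) :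
    cnt τ x (Fin.last N) = 0 := by
  rw [cnt, if_neg, if_neg, add_zero]
  · exact fun h => absurd h.2.1 (Fin.not_lt.mpr (Fin.le_last x))
  · exact fun h => absurd h.2.2.2.1 (Fin.not_lt.mpr (Fin.le_last (τ x)))

lemma crossings_eq' {N : ℕ} (τ : Fin (N+1) → Fin (N+1)) :
    crossings τ = ∑ x : Fin N, ∑ y : Fin N, cnt τ x.castSucc y.castSucc := by
  rw [crossings_eq, Fin.sum_univ_castSucc
    (f := fun x => ∑ y : Fin (N+1), cnt τ x y)]
  have h1 : ∑ y : Fin (N+1), cnt τ (Fin.last N) y = 0 :=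
    Finset.sum_eq_zero fun y _ => cnt_last_left τ y
  rw [h1, add_zero]
  apply Finset.sum_congr rfl
  intro x _
  rw [Fin.sum_univ_castSucc (f := fun y => cnt τ x.castSucc y), cnt_last_right, add_zero]

/-- extend an involution by a new fixed point at the end -/
def ext1 {N : ℕ} (σ : Fin N → Fin N) : Fin (N+1) → Fin (N+1) :=
  fun x => if h : x = Fin.last N then Fin.last N else ((σ (x.castPred h)).castSucc)

/-- extend an involution by matching the new last point with a fixed point `a` -/
def ext2 {N : ℕ} (σ : Fin N → Fin N) (a : Fin N) : Fin (N+1) → Fin (N+1) :=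
  fun x => if h : x = Fin.last N then a.castSucc
    else if x.castPred h = a then Fin.last N else ((σ (x.castPred h)).castSucc)

/-- restriction of an involution of `Fin (N+1)` to `Fin N`, turning the partner of the
last point (if any) into a fixed point -/
def res {N : ℕ} (τ : Fin (N+1) → Fin (N+1)) : Fin N → Fin N :=
  fun x => if h : τ x.castSucc = Fin.last N then x else ((τ x.castSucc).castPred h)

lemma ext1_castSucc {N : ℕ} (σ : Fin N → Fin N) (x : Fin N) :
    ext1 σ x.castSucc = (σ x).castSucc := by
  rw [ext1, dif_neg (Fin.ne_last_of_lt (Fin.castSucc_lt_last x)), Fin.castPred_castSucc]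

lemma ext1_last {N : ℕ} (σ : Fin N → Fin N) : ext1 σ (Fin.last N) = Fin.last N := by
  rw [ext1, dif_pos rfl]

lemma ext2_castSucc {N : ℕ} (σ : Fin N → Fin N) (a : Fin N) (x : Fin N) (h : x ≠ a) :
    ext2 σ a x.castSucc = (σ x).castSucc := by
  rw [ext2, dif_neg (Fin.ne_last_of_lt (Fin.castSucc_lt_last x))]
  rw [Fin.castPred_castSucc, if_neg h]

lemma ext2_castSucc_self {N : ℕ} (σ : Fin N → Fin N) (a : Fin N) :
    ext2 σ a a.castSucc = Fin.last N := by
  rw [ext2, dif_neg (Fin.ne_last_of_lt (Fin.castSucc_lt_last a))]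
  rw [Fin.castPred_castSucc, if_pos rfl]

lemma ext2_last {N : ℕ} (σ : Fin N → Fin N) (a : Fin N) :
    ext2 σ a (Fin.last N) = a.castSucc := by
  rw [ext2, dif_pos rfl]

section Ext1
variable {N : ℕ} (σ : Fin N → Fin N) (hσ : ∀ x, σ (σ x) = x)

include hσ in
lemma ext1_invol (x : Fin (N+1)) : ext1 σ (ext1 σ (x)) = x := by
  induction x using Fin.lastCases with
  | last => rw [ext1_last, ext1_last]
  | cast x => rw [ext1_castSucc, ext1_castSucc, hσ]

lemma fixedCard_split (τ : Fin (N+1) → Fin (N+1)) :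
    (univ.filter fun x => τ x = x).card
      = (∑ x : Fin N, if τ x.castSucc = x.castSucc then 1 else 0)
        + (if τ (Fin.last N) = Fin.last N then 1 else 0) := by
  rw [Finset.card_filter, Fin.sum_univ_castSucc (f := fun x => if τ x = x then 1 else 0)]

lemma ext1_fixedCard :
    (univ.filter fun x => ext1 σ x = x).card = (univ.filter fun x => σ x = x).card + 1 := by
  rw [fixedCard_split, ext1_last, if_pos rfl, Finset.card_filter]
  congr 1
  apply Finset.sum_congr rfl
  intro x _
  rw [ext1_castSucc]
  by_cases h : σ x = x
  · rw [if_pos (by rw [h]), if_pos h]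
  · rw [if_neg (fun hc => h (Fin.castSucc_inj.mp hc)), if_neg h]

lemma res_ext1 : res (ext1 σ) = σ := by
  funext x
  rw [res, dif_neg, Fin.castPred_eq_iff_eq_castSucc]
  · exact ext1_castSucc σ x
  · rw [ext1_castSucc]; exact Fin.ne_last_of_lt (Fin.castSucc_lt_last _)

lemma crossings_ext1 : crossings (ext1 σ) = crossings σ := by
  rw [crossings_eq' (ext1 σ), crossings_eq σ]
  apply Finset.sum_congr rfl
  intro x _
  apply Finset.sum_congr rfl
  intro y _
  simp only [cnt, P1, P2, ext1_castSucc, ne_eq, Fin.castSucc_inj, Fin.castSucc_lt_castSucc_iff]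
end Ext1

section Res1
variable {N : ℕ} (τ : Fin (N+1) → Fin (N+1)) (hτ : ∀ x, τ (τ x) = x)
  (hlast : τ (Fin.last N) = Fin.last N)

include hτ hlast in
lemma tau_cs_ne_last (x : Fin N) : τ x.castSucc ≠ Fin.last N := by
  intro h
  have := hτ x.castSucc
  rw [h, hlast] at this
  exact Fin.ne_last_of_lt (Fin.castSucc_lt_last x) this.symm

include hτ hlast in
lemma ext1_res : ext1 (res τ) = τ := by
  funext x
  induction x using Fin.lastCases with
  | last => rw [ext1_last, hlast]
  | cast x =>
    rw [ext1_castSucc, res, dif_neg (tau_cs_ne_last τ hτ hlast x), Fin.castSucc_castPred]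

include hτ hlast in
lemma res_invol1 (x : Fin N) : res τ (res τ x) = x := by
  have h1 := tau_cs_ne_last τ hτ hlast x
  have e1 : res τ x = (τ x.castSucc).castPred h1 := by rw [res, dif_neg h1]
  have h2 : τ ((τ x.castSucc).castPred h1).castSucc ≠ Fin.last N := by
    rw [Fin.castSucc_castPred, hτ]
    exact Fin.ne_last_of_lt (Fin.castSucc_lt_last x)
  rw [e1, res, dif_neg h2]
  apply Fin.castSucc_inj.mp
  rw [Fin.castSucc_castPred, Fin.castSucc_castPred, hτ]

include hτ hlast in
lemma res_fixedCard :
    (univ.filter fun x : Fin (N+1) => τ x = x).card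
      = (univ.filter fun x => res τ x = x).card + 1 := by
  rw [fixedCard_split, if_pos hlast, Finset.card_filter]
  congr 1
  apply Finset.sum_congr rfl
  intro x _
  have h : τ x.castSucc ≠ Fin.last N := tau_cs_ne_last τ hτ hlast x
  rw [res, dif_neg h]
  by_cases h2 : τ x.castSucc = x.castSucc
  · rw [if_pos h2, if_pos (by rw [Fin.castPred_eq_iff_eq_castSucc]; exact h2)]
  · rw [if_neg h2, if_neg (fun hc => h2 (by rw [← Fin.castSucc_castPred _ h, hc]))]
end Res1

section Ext2
variable {N : ℕ} (σ : Fin N → Fin N) (a : Fin N)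

lemma cs_ne_last (x : Fin N) : x.castSucc ≠ Fin.last N :=
  Fin.ne_last_of_lt (Fin.castSucc_lt_last x)

lemma sigma_ne_a (hσ : ∀ x, σ (σ x) = x) (ha : σ a = a) {x : Fin N} (hxa : x ≠ a) :
    σ x ≠ a := fun h => hxa (by rw [← hσ x, h, ha])

lemma ext2_invol (hσ : ∀ x, σ (σ x) = x) (ha : σ a = a) (x : Fin (N+1)) :
    ext2 σ a (ext2 σ a x) = x := by
  induction x using Fin.lastCases with
  | last => rw [ext2_last, ext2_castSucc_self]
  | cast y =>
    by_cases hy : y = a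
    · subst hy; rw [ext2_castSucc_self, ext2_last]
    · rw [ext2_castSucc σ a y hy, ext2_castSucc σ a (σ y) (sigma_ne_a σ a hσ ha hy), hσ]

lemma ext2_fixedCard (ha : σ a = a) :
    (univ.filter fun x => ext2 σ a x = x).card + 1 = (univ.filter fun x => σ x = x).card := by
  rw [fixedCard_split, if_neg (by rw [ext2_last]; exact cs_ne_last a), add_zero,
    Finset.card_filter]
  have h1 : ∀ x : Fin N, (if ext2 σ a x.castSucc = x.castSucc then 1 else 0)
      = if σ x = x ∧ x ≠ a then 1 else 0 := by
    intro x
    by_cases hx : x = a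
    · subst hx
      rw [ext2_castSucc_self, if_neg (Ne.symm (cs_ne_last _)), if_neg (by simp)]
    · rw [ext2_castSucc σ a x hx]
      by_cases h2 : σ x = x
      · rw [if_pos (by rw [h2]), if_pos ⟨h2, hx⟩]
      · rw [if_neg (fun hc => h2 (Fin.castSucc_inj.mp hc)), if_neg (fun hc => h2 hc.1)]
  rw [Finset.sum_congr rfl fun x _ => h1 x,
    ← Finset.add_sum_erase _ (fun x => if σ x = x ∧ x ≠ a then 1 else 0) (Finset.mem_univ a),
    ← Finset.add_sum_erase _ (fun x => if σ x = x then 1 else 0) (Finset.mem_univ a),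
    if_neg (by simp), if_pos ha, zero_add, add_comm _ 1]
  congr 1
  apply Finset.sum_congr rfl
  intro x hx
  rw [Finset.mem_erase] at hx
  by_cases h2 : σ x = x
  · rw [if_pos ⟨h2, hx.1⟩, if_pos h2]
  · rw [if_neg (fun hc => h2 hc.1), if_neg h2]

lemma res_ext2 (ha : σ a = a) : res (ext2 σ a) = σ := by
  funext x
  by_cases hx : x = a
  · subst hx
    rw [res, dif_pos (ext2_castSucc_self σ _), ha]
  · rw [res, dif_neg (by rw [ext2_castSucc σ a x hx]; exact cs_ne_last _),
      Fin.castPred_eq_iff_eq_castSucc]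
    exact ext2_castSucc σ a x hx

lemma ext2_last_ne : ext2 σ a (Fin.last N) ≠ Fin.last N := by
  rw [ext2_last]; exact cs_ne_last a
end Ext2

section Res2
variable {N : ℕ} (τ : Fin (N+1) → Fin (N+1)) (a : Fin N)

lemma res2_tau_cs_a (hτ : ∀ x, τ (τ x) = x) (haeq : τ (Fin.last N) = a.castSucc) :
    τ a.castSucc = Fin.last N := by rw [← haeq, hτ]

lemma res2_fixed_a (hτ : ∀ x, τ (τ x) = x) (haeq : τ (Fin.last N) = a.castSucc) :
    res τ a = a := by rw [res, dif_pos (res2_tau_cs_a τ a hτ haeq)]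

lemma res2_cs_ne_last (hτ : ∀ x, τ (τ x) = x) (haeq : τ (Fin.last N) = a.castSucc)
    {x : Fin N} (hx : x ≠ a) : τ x.castSucc ≠ Fin.last N := by
  intro h
  have : τ (Fin.last N) = x.castSucc := by rw [← h, hτ]
  rw [haeq] at this
  exact hx (Fin.castSucc_inj.mp this.symm)

lemma res2_invol (hτ : ∀ x, τ (τ x) = x) (haeq : τ (Fin.last N) = a.castSucc) (x : Fin N) :
    res τ (res τ x) = x := by
  by_cases hx : x = a
  · subst hx
    rw [res2_fixed_a τ _ hτ haeq, res2_fixed_a τ _ hτ haeq]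
  · have h1 := res2_cs_ne_last τ a hτ haeq hx
    have e1 : res τ x = (τ x.castSucc).castPred h1 := by rw [res, dif_neg h1]
    have h2 : τ ((τ x.castSucc).castPred h1).castSucc ≠ Fin.last N := by
      rw [Fin.castSucc_castPred, hτ]
      exact cs_ne_last x
    rw [e1, res, dif_neg h2]
    apply Fin.castSucc_inj.mp
    rw [Fin.castSucc_castPred, Fin.castSucc_castPred, hτ]

lemma res2_fixedCard (hτ : ∀ x, τ (τ x) = x) (haeq : τ (Fin.last N) = a.castSucc) :
    (univ.filter fun x => res τ x = x).card
      = (univ.filter fun x : Fin (N+1) => τ x = x).card + 1 := by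
  rw [fixedCard_split, if_neg (by rw [haeq]; exact cs_ne_last a), add_zero,
    Finset.card_filter,
    ← Finset.add_sum_erase _ (fun x => if res τ x = x then 1 else 0) (Finset.mem_univ a),
    ← Finset.add_sum_erase _ (fun x : Fin N => if τ x.castSucc = x.castSucc then 1 else 0)
      (Finset.mem_univ a),
    if_pos (res2_fixed_a τ a hτ haeq),
    if_neg (by rw [res2_tau_cs_a τ a hτ haeq]; exact Ne.symm (cs_ne_last a)), zero_add,
    add_comm 1]
  congr 1
  apply Finset.sum_congr rfl
  intro x hx
  rw [Finset.mem_erase] at hx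
  have h1 := res2_cs_ne_last τ a hτ haeq hx.1
  rw [res, dif_neg h1]
  by_cases h2 : τ x.castSucc = x.castSucc
  · rw [if_pos (by rw [Fin.castPred_eq_iff_eq_castSucc]; exact h2), if_pos h2]
  · rw [if_neg (fun hc => h2 (by rw [← Fin.castSucc_castPred _ h1, hc])), if_neg h2]

lemma ext2_res (hτ : ∀ x, τ (τ x) = x) (haeq : τ (Fin.last N) = a.castSucc) :
    ext2 (res τ) a = τ := by
  funext x
  induction x using Fin.lastCases with
  | last => rw [ext2_last, haeq]
  | cast y =>
    by_cases hy : y = a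
    · subst hy
      rw [ext2_castSucc_self, res2_tau_cs_a τ _ hτ haeq]
    · have h1 := res2_cs_ne_last τ a hτ haeq hy
      rw [ext2_castSucc _ a y hy, res, dif_neg h1, Fin.castSucc_castPred]
end Res2

section CrossExt2
variable {N : ℕ} (σ : Fin N → Fin N) (a : Fin N)

lemma cnt_L1 (hσ : ∀ x, σ (σ x) = x) (ha : σ a = a) (x : Fin N) :
    cnt (ext2 σ a) x.castSucc a.castSucc
      = (if x < a ∧ a < σ x then 1 else 0) + (if σ x = x ∧ a < x then 1 else 0) := by
  by_cases hx : x = a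
  · subst hx
    rw [cnt, if_neg (fun h => lt_irrefl _ h.2.2.1), if_neg (fun h => lt_irrefl _ h.2.1),
      if_neg (fun h => lt_irrefl _ h.1), if_neg (fun h => lt_irrefl _ h.2)]
  · rw [cnt]
    have e1 : ext2 σ a x.castSucc = (σ x).castSucc := ext2_castSucc σ a x hx
    have e2 : ext2 σ a a.castSucc = Fin.last N := ext2_castSucc_self σ a
    congr 1
    · by_cases hc : x < a ∧ a < σ x
      · rw [if_pos hc, if_pos]
        have hne : σ x ≠ x := fun h => absurd (hc.1.trans hc.2) (by rw [h]; exact lt_irrefl x)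
        refine ⟨?_, ?_, ?_, ?_, ?_⟩
        · rw [e1]; exact fun h => hne (Fin.castSucc_inj.mp h)
        · rw [e2]; exact Ne.symm (cs_ne_last a)
        · exact Fin.castSucc_lt_castSucc_iff.mpr hc.1
        · rw [e1]; exact Fin.castSucc_lt_castSucc_iff.mpr hc.2
        · rw [e1, e2]; exact Fin.castSucc_lt_last _
      · rw [if_neg hc, if_neg]
        intro h
        obtain ⟨-, -, h3, h4, -⟩ := h
        rw [e1] at h4
        exact hc ⟨Fin.castSucc_lt_castSucc_iff.mp h3, Fin.castSucc_lt_castSucc_iff.mp h4⟩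
    · by_cases hc : σ x = x ∧ a < x
      · rw [if_pos hc, if_pos]
        refine ⟨?_, ?_, ?_⟩
        · rw [e1, hc.1]
        · exact Fin.castSucc_lt_castSucc_iff.mpr hc.2
        · rw [e2]; exact Fin.castSucc_lt_last _
      · rw [if_neg hc, if_neg]
        intro h
        obtain ⟨h1, h2, -⟩ := h
        rw [e1] at h1
        exact hc ⟨Fin.castSucc_inj.mp h1, Fin.castSucc_lt_castSucc_iff.mp h2⟩

lemma cnt_L3 (ha : σ a = a) (y : Fin N) (hy : y ≠ a) :
    cnt (ext2 σ a) a.castSucc y.castSucc = 0 := by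
  have e1 : ext2 σ a y.castSucc = (σ y).castSucc := ext2_castSucc σ a y hy
  have e2 : ext2 σ a a.castSucc = Fin.last N := ext2_castSucc_self σ a
  rw [cnt, if_neg, if_neg]
  · exact fun h => (cs_ne_last a) (by rw [← e2, h.1])
  · intro h
    obtain ⟨-, -, -, -, h5⟩ := h
    rw [e1, e2] at h5
    exact absurd h5 (Fin.not_lt.mpr (Fin.le_last _))

lemma cnt_L2 (x y : Fin N) (hx : x ≠ a) (hy : y ≠ a) :
    cnt (ext2 σ a) x.castSucc y.castSucc = cnt σ x y := by
  simp only [cnt, P1, P2, ext2_castSucc σ a x hx, ext2_castSucc σ a y hy, ne_eq,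
    Fin.castSucc_inj, Fin.castSucc_lt_castSucc_iff]

lemma cnt_sigma_xa (ha : σ a = a) (x : Fin N) : cnt σ x a = 0 := by
  rw [cnt, if_neg (fun h => h.2.1 ha), if_neg, add_zero]
  intro h
  have h3 := h.2.2
  rw [ha] at h3
  exact absurd (h.2.1.trans h3) (lt_irrefl a)

lemma cnt_sigma_ay (ha : σ a = a) (y : Fin N) :
    cnt σ a y = if y < a ∧ a < σ y then 1 else 0 := by
  rw [cnt, if_neg (fun h => h.1 ha), zero_add]
  by_cases hc : y < a ∧ a < σ y
  · rw [if_pos hc, if_pos ⟨ha, hc.1, hc.2⟩]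
  · rw [if_neg hc, if_neg (fun h => hc ⟨h.2.1, h.2.2⟩)]

lemma crossings_ext2 (hσ : ∀ x, σ (σ x) = x) (ha : σ a = a) :
    crossings (ext2 σ a) = crossings σ + (univ.filter fun x => σ x = x ∧ a < x).card := by
  have hA := fun x => cnt_L1 σ a hσ ha x
  -- split both double sums at a
  have key1 : crossings (ext2 σ a)
      = ((∑ x : Fin N, if x < a ∧ a < σ x then 1 else 0)
          + (univ.filter fun x => σ x = x ∧ a < x).card)
        + ∑ x ∈ univ.erase a, ∑ y ∈ univ.erase a, cnt σ x y := by
    rw [crossings_eq']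
    have inner : ∀ x : Fin N, ∑ y : Fin N, cnt (ext2 σ a) x.castSucc y.castSucc
        = cnt (ext2 σ a) x.castSucc a.castSucc
          + ∑ y ∈ univ.erase a, cnt (ext2 σ a) x.castSucc y.castSucc := by
      intro x
      exact (Finset.add_sum_erase _ _ (Finset.mem_univ a)).symm
    rw [Finset.sum_congr rfl fun x _ => inner x, Finset.sum_add_distrib]
    congr 1
    · rw [Finset.sum_congr rfl fun x _ => hA x, Finset.sum_add_distrib, Finset.card_filter]
    · rw [← Finset.add_sum_erase _ _ (Finset.mem_univ a),
        Finset.sum_eq_zero (fun y hy => cnt_L3 σ a ha y (Finset.mem_erase.mp hy).1), zero_add]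
      apply Finset.sum_congr rfl
      intro x hx
      exact Finset.sum_congr rfl fun y hy =>
        cnt_L2 σ a x y (Finset.mem_erase.mp hx).1 (Finset.mem_erase.mp hy).1
  have key2 : crossings σ
      = (∑ x : Fin N, if x < a ∧ a < σ x then 1 else 0)
        + ∑ x ∈ univ.erase a, ∑ y ∈ univ.erase a, cnt σ x y := by
    rw [crossings_eq]
    rw [← Finset.add_sum_erase _ (fun x => ∑ y : Fin N, cnt σ x y) (Finset.mem_univ a)]
    congr 1
    · rw [Finset.sum_congr rfl fun y (_ : y ∈ univ) => cnt_sigma_ay σ a ha y]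
    · apply Finset.sum_congr rfl
      intro x hx
      rw [← Finset.add_sum_erase _ _ (Finset.mem_univ a), cnt_sigma_xa σ a ha x, zero_add]
  rw [key1, key2]
  ring
end CrossExt2

section Count
variable {R : Type*} [CommSemiring R] (v : R)

def invSet (N k : ℕ) : Finset (Fin N → Fin N) :=
  Finset.univ.filter fun σ =>
    (∀ x, σ (σ x) = x) ∧ (Finset.univ.filter fun x => σ x = x).card = k

def Sfun (N k : ℕ) : R := ∑ σ ∈ invSet N k, v ^ crossings σ

lemma mem_invSet {N k : ℕ} {σ : Fin N → Fin N} :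
    σ ∈ invSet N k ↔ (∀ x, σ (σ x) = x) ∧ (Finset.univ.filter fun x => σ x = x).card = k := by
  rw [invSet, Finset.mem_filter]
  exact ⟨fun h => h.2, fun h => ⟨Finset.mem_univ σ, h⟩⟩

lemma sum_pow_count : ∀ (n : ℕ) {N : ℕ} (A : Finset (Fin N)), A.card = n →
    ∑ a ∈ A, v ^ (A.filter fun b => a < b).card = ∑ i ∈ Finset.range n, v ^ i := by
  intro n
  induction n with
  | zero =>
    intro N A hA
    rw [Finset.card_eq_zero.mp hA]
    simp
  | succ n ih =>
    intro N A hA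
    have hne : A.Nonempty := Finset.card_pos.mp (by omega)
    set M := A.max' hne with hM
    have hMA : M ∈ A := A.max'_mem hne
    rw [← Finset.add_sum_erase _ _ hMA]
    have h1 : (A.filter fun b => M < b) = ∅ := by
      apply Finset.filter_eq_empty_iff.mpr
      intro b hb
      exact not_lt.mpr (A.le_max' b hb)
    have h2 : ∀ a ∈ A.erase M,
        (A.filter fun b => a < b).card = ((A.erase M).filter fun b => a < b).card + 1 := by
      intro a ha
      rw [Finset.mem_erase] at ha
      have : A.filter (fun b => a < b) = insert M ((A.erase M).filter fun b => a < b) := by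
        ext b
        rw [Finset.mem_filter, Finset.mem_insert, Finset.mem_filter, Finset.mem_erase]
        constructor
        · intro hb
          by_cases hbM : b = M
          · exact Or.inl hbM
          · exact Or.inr ⟨⟨hbM, hb.1⟩, hb.2⟩
        · intro hb
          rcases hb with hb | hb
          · subst hb
            exact ⟨hMA, lt_of_le_of_ne (A.le_max' a ha.2) ha.1⟩
          · exact ⟨hb.1.2, hb.2⟩
      rw [this, Finset.card_insert_of_notMem (fun hc => (Finset.mem_erase.mp
        (Finset.mem_of_mem_filter M hc)).1 rfl)]
    rw [h1, Finset.card_empty, pow_zero,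
      Finset.sum_congr rfl (fun a ha => by rw [h2 a ha, pow_succ])]
    rw [← Finset.sum_mul, ih (A.erase M) (by rw [Finset.card_erase_of_mem hMA, hA]; rfl),
      geom_sum_succ]
    ring

lemma partA0 {N : ℕ} :
    (invSet (N+1) 0).filter (fun τ => τ (Fin.last N) = Fin.last N) = ∅ := by
  apply Finset.filter_eq_empty_iff.mpr
  intro τ hτ
  intro hlast
  have h1 : Fin.last N ∈ Finset.univ.filter fun x => τ x = x :=
    Finset.mem_filter.mpr ⟨Finset.mem_univ _, hlast⟩
  have := Finset.card_pos.mpr ⟨_, h1⟩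
  rw [(mem_invSet.mp hτ).2] at this
  exact absurd this (lt_irrefl 0)

lemma partA {N k : ℕ} :
    ∑ τ ∈ (invSet (N+1) (k+1)).filter (fun τ => τ (Fin.last N) = Fin.last N),
        v ^ crossings τ
      = Sfun v N k := by
  rw [Sfun]
  apply Finset.sum_bij' (i := fun τ _ => res τ) (j := fun σ _ => ext1 σ)
  · intro τ hτ
    obtain ⟨hmem, hlast⟩ := Finset.mem_filter.mp hτ
    obtain ⟨hinv, hcard⟩ := mem_invSet.mp hmem
    apply mem_invSet.mpr
    refine ⟨res_invol1 τ hinv hlast, ?_⟩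
    have := res_fixedCard τ hinv hlast
    omega
  · intro σ hσ
    obtain ⟨hinv, hcard⟩ := mem_invSet.mp hσ
    rw [Finset.mem_filter]
    refine ⟨mem_invSet.mpr ⟨ext1_invol σ hinv, ?_⟩, ext1_last σ⟩
    rw [ext1_fixedCard, hcard]
  · intro τ hτ
    obtain ⟨hmem, hlast⟩ := Finset.mem_filter.mp hτ
    exact ext1_res τ (mem_invSet.mp hmem).1 hlast
  · intro σ hσ
    exact res_ext1 σ
  · intro τ hτ
    obtain ⟨hmem, hlast⟩ := Finset.mem_filter.mp hτ
    obtain ⟨hinv, hcard⟩ := mem_invSet.mp hmem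
    have e1 : crossings (ext1 (res τ)) = crossings (res τ) := crossings_ext1 (res τ)
    rw [ext1_res τ hinv hlast] at e1
    rw [e1]

lemma partB {N k : ℕ} :
    ∑ τ ∈ (invSet (N+1) k).filter (fun τ => ¬ τ (Fin.last N) = Fin.last N),
        v ^ crossings τ
      = ∑ σ ∈ invSet N (k+1), ∑ a ∈ Finset.univ.filter (fun x => σ x = x),
          v ^ (crossings σ + (Finset.univ.filter fun x => σ x = x ∧ a < x).card) := by
  rw [Finset.sum_sigma']
  symm
  apply Finset.sum_bij' (i := fun p _ => ext2 p.1 p.2)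
    (j := fun τ hτ => ⟨res τ, (τ (Fin.last N)).castPred
      (Finset.mem_filter.mp hτ).2⟩)
  · intro p hp
    obtain ⟨σ, a⟩ := p
    obtain ⟨hmem, hfix⟩ := Finset.mem_sigma.mp hp
    obtain ⟨hinv, hcard⟩ := mem_invSet.mp hmem
    have ha : σ a = a := (Finset.mem_filter.mp hfix).2
    apply Sigma.ext
    · exact res_ext2 σ a ha
    · apply heq_of_eq
      rw [Fin.castPred_eq_iff_eq_castSucc]
      exact ext2_last σ a
  · intro τ hτ
    obtain ⟨hmem, hne⟩ := Finset.mem_filter.mp hτ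
    have hne' : ¬ τ (Fin.last N) = Fin.last N := (Finset.mem_filter.mp hτ).2
    obtain ⟨hinv, hcard⟩ := mem_invSet.mp hmem
    have haeq : τ (Fin.last N) = ((τ (Fin.last N)).castPred hne').castSucc :=
      (Fin.castSucc_castPred _ hne').symm
    exact ext2_res τ _ hinv haeq
  · intro p hp
    obtain ⟨hmem, hfix⟩ := Finset.mem_sigma.mp hp
    obtain ⟨hinv, hcard⟩ := mem_invSet.mp hmem
    have ha : p.1 p.2 = p.2 := (Finset.mem_filter.mp hfix).2
    rw [crossings_ext2 p.1 p.2 hinv ha]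
  · intro p hp
    obtain ⟨hmem, hfix⟩ := Finset.mem_sigma.mp hp
    obtain ⟨hinv, hcard⟩ := mem_invSet.mp hmem
    have ha : p.1 p.2 = p.2 := (Finset.mem_filter.mp hfix).2
    apply Finset.mem_filter.mpr
    constructor
    · apply mem_invSet.mpr
      refine ⟨ext2_invol p.1 p.2 hinv ha, ?_⟩
      have := ext2_fixedCard p.1 p.2 ha
      omega
    · exact ext2_last_ne p.1 p.2
  · intro τ hτ
    obtain ⟨hmem, hne⟩ := Finset.mem_filter.mp hτ
    obtain ⟨hinv, hcard⟩ := mem_invSet.mp hmem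
    have hne' : ¬ τ (Fin.last N) = Fin.last N := (Finset.mem_filter.mp hτ).2
    have haeq : τ (Fin.last N) = ((τ (Fin.last N)).castPred hne').castSucc :=
      (Fin.castSucc_castPred _ hne').symm
    apply Finset.mem_sigma.mpr
    constructor
    · apply mem_invSet.mpr
      refine ⟨res2_invol τ _ hinv haeq, ?_⟩
      rw [res2_fixedCard τ _ hinv haeq, hcard]
    · exact Finset.mem_filter.mpr ⟨Finset.mem_univ _, res2_fixed_a τ _ hinv haeq⟩
end Count

section SfunRec
variable {R : Type*} [CommSemiring R] (v : R)

lemma partB' {N k : ℕ} :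
    ∑ τ ∈ (invSet (N+1) k).filter (fun τ => ¬ τ (Fin.last N) = Fin.last N),
        v ^ crossings τ
      = (∑ i ∈ Finset.range (k+1), v ^ i) * Sfun v N (k+1) := by
  rw [partB, Sfun, Finset.mul_sum]
  apply Finset.sum_congr rfl
  intro σ hσ
  obtain ⟨hinv, hcard⟩ := mem_invSet.mp hσ
  have h1 : ∀ a ∈ Finset.univ.filter (fun x => σ x = x),
      v ^ (crossings σ + (Finset.univ.filter fun x => σ x = x ∧ a < x).card)
        = v ^ crossings σ *
          v ^ (((Finset.univ.filter fun x => σ x = x)).filter (fun b => a < b)).card := by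
    intro a _
    rw [pow_add, Finset.filter_filter]
  rw [Finset.sum_congr rfl h1, ← Finset.mul_sum,
    sum_pow_count v (k+1) _ hcard, mul_comm]

lemma Sfun_succ_zero (N : ℕ) :
    Sfun v (N+1) 0 = Sfun v N 1 := by
  rw [Sfun, ← Finset.sum_filter_add_sum_filter_not (invSet (N+1) 0)
    (fun τ => τ (Fin.last N) = Fin.last N), partA0, Finset.sum_empty, zero_add, partB']
  simp

lemma Sfun_succ_pos (N k : ℕ) :
    Sfun v (N+1) (k+1) = Sfun v N k + (∑ i ∈ Finset.range (k+2), v ^ i) * Sfun v N (k+2) := by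
  rw [Sfun, ← Finset.sum_filter_add_sum_filter_not (invSet (N+1) (k+1))
    (fun τ => τ (Fin.last N) = Fin.last N), partA, partB']

lemma Sfun_vanish (N k : ℕ) (h : N < k) : Sfun v N k = 0 := by
  rw [Sfun]
  apply Finset.sum_eq_zero
  intro σ hσ
  obtain ⟨hinv, hcard⟩ := mem_invSet.mp hσ
  have := Finset.card_filter_le (Finset.univ : Finset (Fin N)) (fun x => σ x = x)
  rw [hcard, Finset.card_univ, Fintype.card_fin] at this
  omega

lemma Sfun_zero_zero : Sfun v 0 0 = 1 := by
  rw [Sfun]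
  have h1 : invSet 0 0 = Finset.univ := by
    apply Finset.filter_true_of_mem
    intro σ _
    exact ⟨fun x => x.elim0, by simp⟩
  rw [h1]
  rw [show (Finset.univ : Finset (Fin 0 → Fin 0)) = {fun x => x.elim0} from by
    apply Finset.eq_singleton_iff_unique_mem.mpr
    exact ⟨Finset.mem_univ _, fun f _ => funext fun x => x.elim0⟩]
  rw [Finset.sum_singleton]
  have : crossings (fun x : Fin 0 => x.elim0) = 0 := by
    rw [crossings]
    simp
  rw [this, pow_zero]
end SfunRec


open Finset Polynomial

lemma chordDiagrams_eq_invSet (f : ℕ) : chordDiagrams f 0 = invSet (2 * f) 0 := rfl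

lemma TpolyK_eq (f : ℕ) : TpolyK f 0 = Sfun (q ^ 2) (2 * f) 0 := by
  rw [TpolyK, Tpoly, Polynomial.eval₂_finset_sum, Sfun, ← chordDiagrams_eq_invSet]
  apply Finset.sum_congr rfl
  intro σ _
  rw [Polynomial.eval₂_X_pow]

lemma main_Q (N : ℕ) : ∀ k : ℕ,
    (1 - q⁻¹ ^ 2) ^ ((N - k + 1) / 2) * (jval N).coeff k = Sfun (q ^ 2) N k := by
  induction N with
  | zero =>
    intro k
    match k with
    | 0 =>
      rw [show (0 - 0 + 1) / 2 = 0 from rfl, pow_zero, one_mul, Sfun_zero_zero]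
      simp [jval]
    | k + 1 =>
      rw [coeff_jval_zero (k+1) (by omega), Sfun_vanish _ 0 (k+1) (by omega), mul_zero]
  | succ N ih =>
    intro k
    by_cases hbig : N + 2 ≤ k
    · rw [d_vanish (N+1) k (by omega), Sfun_vanish _ _ _ (by omega), mul_zero]
    · match k with
      | 0 =>
        have h1 : rho 0 = 1 / (1 - q⁻¹ ^ 2) := by
          rw [rho_eq]; norm_num
        rw [d_rec0, Sfun_succ_zero, h1,
          show (N + 1 - 0 + 1) / 2 = (N - 1 + 1) / 2 + 1 from by omega, pow_succ, ← ih 1]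
        linear_combination ((1 - q⁻¹ ^ 2) ^ ((N - 1 + 1) / 2) * (jval N).coeff 1) *
          mul_inv_cancel₀ u_ne
      | k + 1 =>
        by_cases hk : k + 1 ≤ N
        · rw [d_recS, Sfun_succ_pos, mul_add]
          congr 1
          · rw [show (N + 1 - (k + 1) + 1) / 2 = (N - k + 1) / 2 from by omega]
            exact ih k
          · rw [rho_eq,
              show (N + 1 - (k + 1) + 1) / 2 = (N - (k + 2) + 1) / 2 + 1 from by omega,
              pow_succ, ← ih (k + 2)]
            linear_combination ((1 - q⁻¹ ^ 2) ^ ((N - (k + 2) + 1) / 2) * (jval N).coeff (k + 2) *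
              (∑ x ∈ Finset.range (k + 2), (q ^ 2) ^ x)) * mul_inv_cancel₀ u_ne
        · have hkN : k = N := by omega
          rw [d_recS, d_vanish N (k + 2) (by omega), zero_mul, add_zero,
            Sfun_succ_pos, Sfun_vanish _ N (k + 2) (by omega), mul_zero, add_zero,
            show (N + 1 - (k + 1) + 1) / 2 = (N - k + 1) / 2 from by omega]
          exact ih k

lemma iform_eq (n m : ℕ) :
    iform (Polynomial.X ^ n) (Polynomial.X ^ m) = (jval (n + m)).coeff 0 := by
  rw [iform, jmap_X_pow, jmap_X_pow, formMinus_jval]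

/-- `⟨Bⁿ, Bᵐ⟩ⁱ = T_{f,0}(q²)/(1−q⁻²)^f` if `m + n = 2f`, and
`⟨Bⁿ, Bᵐ⟩ⁱ = 0` if `m + n` is odd. -/
theorem stmt8 (m n : ℕ) :
    (∀ f : ℕ, m + n = 2 * f →
        iform (Polynomial.X ^ n) (Polynomial.X ^ m) = TpolyK f 0 / (1 - q⁻¹ ^ 2) ^ f) ∧
    (Odd (m + n) → iform (Polynomial.X ^ n) (Polynomial.X ^ m) = 0) := by
  constructor
  · intro f hf
    rw [iform_eq, show n + m = 2 * f from by omega]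
    have hQ := main_Q (2 * f) 0
    rw [show (2 * f - 0 + 1) / 2 = f from by omega, ← TpolyK_eq] at hQ
    rw [eq_div_iff (pow_ne_zero f u_ne), mul_comm]
    exact hQ
  · intro hodd
    rw [iform_eq]
    apply d_parity
    rw [add_zero, add_comm]
    exact hodd

end
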